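/- Let A and B be C-hyperideals of a commutative multiplicative hyperring G and S an MCS of G with B ∩ S ≠ ∅. If A is a quasi S-primary hyperideal of G, then both B∘A and A ∩ B are quasi S-primary hyperideals of G. -/

import Mathlib

open Set

/-- A commutative multiplicative hyperring: a commutative additive group with a
commutative, associative hyperoperation `hmul` satisfying `(-a)∘b = -(a∘b)`,
weak distributivity, and having an identity element `e` with `a ∈ e∘a`. -/
class MulHyperring (G : Type*) extends AddCommGroup G where
  hmul : G → G → Set G
  hmul_nonempty : ∀ a b : G, (hmul a b).Nonempty
  hmul_comm : ∀ a b : G, hmul a b = hmul b a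
  hmul_assoc : ∀ a b c : G, (⋃ x ∈ hmul a b, hmul x c) = ⋃ x ∈ hmul b c, hmul a x
  neg_hmul : ∀ a b : G, hmul (-a) b = (fun x => -x) '' (hmul a b)
  hmul_add : ∀ a b c : G,
    hmul a (b + c) ⊆ {x | ∃ u ∈ hmul a b, ∃ v ∈ hmul a c, x = u + v}
  e : G
  e_mem : ∀ a : G, a ∈ hmul e a

namespace MulHyperring

variable {G : Type*} [MulHyperring G]

/-- Hyperproduct of an element with a set: `a ∘ B = ⋃ b ∈ B, a ∘ b`. -/
def smulSet (a : G) (B : Set G) : Set G := ⋃ b ∈ B, hmul a b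

/-- Hyperproduct of two sets. -/
def setMul (A B : Set G) : Set G := ⋃ a ∈ A, ⋃ b ∈ B, hmul a b

/-- Hyperproduct `a₁ ∘ a₂ ∘ ⋯ ∘ aₙ` of a (nonempty) list of elements. -/
def hProd : List G → Set G
  | [] => ∅
  | [a] => {a}
  | a :: b :: l => smulSet a (hProd (b :: l))

/-- `aⁿ` as a hyperproduct. -/
def hPow (a : G) (n : ℕ) : Set G := hProd (List.replicate n a)

/-- `A` is a hyperideal of `G`. -/
def IsHyperideal (A : Set G) : Prop :=
  A.Nonempty ∧ (∀ x ∈ A, ∀ y ∈ A, x - y ∈ A) ∧ ∀ r : G, ∀ x ∈ A, hmul r x ⊆ A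

/-- `A` is a `C`-hyperideal: any finite hyperproduct meeting `A` is contained in `A`. -/
def IsCHyperideal (A : Set G) : Prop :=
  IsHyperideal A ∧ ∀ l : List G, l ≠ [] → (hProd l ∩ A).Nonempty → hProd l ⊆ A

/-- The radical of a (C-)hyperideal: `{a | aⁿ ⊆ A for some n ≥ 1}`. -/
def rad (A : Set G) : Set G := {a | ∃ n : ℕ, 1 ≤ n ∧ hPow a n ⊆ A}

/-- The hyperideal generated by a set. -/
def idealGen (X : Set G) : Set G := ⋂₀ {A | IsHyperideal A ∧ X ⊆ A}

/-- The hyperideal product of two hyperideals. -/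
def idealMul (A B : Set G) : Set G := idealGen (setMul A B)

/-- Multiplicative closed subset. -/
def IsMCS (S : Set G) : Prop :=
  e ∈ S ∧ ∀ s₁ ∈ S, ∀ s₂ ∈ S, (hmul s₁ s₂ ∩ S).Nonempty

/-- Prime hyperideal. -/
def IsPrime (P : Set G) : Prop :=
  IsHyperideal P ∧ P ≠ univ ∧ ∀ x y : G, hmul x y ⊆ P → x ∈ P ∨ y ∈ P

/-- `S`-prime hyperideal. -/
def IsSPrime (S A : Set G) : Prop :=
  IsHyperideal A ∧ A ∩ S = ∅ ∧
    ∃ t ∈ S, ∀ u v : G, hmul u v ⊆ A → hmul t u ⊆ A ∨ hmul t v ⊆ A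

/-- `S`-primary hyperideal. -/
def IsSPrimary (S A : Set G) : Prop :=
  IsHyperideal A ∧ A ∩ S = ∅ ∧
    ∃ t ∈ S, ∀ u v : G, hmul u v ⊆ A → hmul t u ⊆ A ∨ hmul t v ⊆ rad A

/-- Quasi `S`-primary hyperideal. -/
def IsQuasiSPrimary (S A : Set G) : Prop :=
  IsHyperideal A ∧ A ∩ S = ∅ ∧
    ∃ t ∈ S, ∀ u v : G, hmul u v ⊆ A → hmul t u ⊆ rad A ∨ hmul t v ⊆ rad A

/-- Weakly quasi `S`-primary hyperideal. -/
def IsWeaklyQuasiSPrimary (S A : Set G) : Prop :=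
  IsHyperideal A ∧ A ∩ S = ∅ ∧
    ∃ t ∈ S, ∀ u v : G, 0 ∉ hmul u v → hmul u v ⊆ A →
      hmul t u ⊆ rad A ∨ hmul t v ⊆ rad A

/-- Strongly quasi `S`-primary hyperideal. -/
def IsStronglyQuasiSPrimary (S A : Set G) : Prop :=
  IsHyperideal A ∧ A ∩ S = ∅ ∧
    ∃ t ∈ S, ∀ u v : G, hmul u v ⊆ A →
      smulSet t (hPow u 2) ⊆ A ∨ hmul t v ⊆ rad A

/-- The residual `(B : x) = {y | y ∘ x ⊆ B}`. -/
def colon (B : Set G) (x : G) : Set G := {y | hmul y x ⊆ B}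

end MulHyperring

/-!
Pick `s ∈ B ∩ S`. If `x ∈ rad A`, then every `z ∈ s ∘ x` lies in `rad (B ∘ A)`, since
`zⁿ ⊆ sⁿ ∘ xⁿ ⊆ B ∘ A`. Hence, if `t ∈ S` witnesses that `A` is quasi `S`-primary, any
`t' ∈ (t ∘ s) ∩ S` witnesses it for `B ∘ A`: from `t ∘ u ⊆ rad A` we get
`t' ∘ u ⊆ s ∘ (t ∘ u) ⊆ rad (B ∘ A)`. The same witness works for `A ∩ B ⊇ B ∘ A`.
-/

namespace MulHyperring

variable {G : Type*} [MulHyperring G]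

lemma mem_setMul {A B : Set G} {z : G} : z ∈ setMul A B ↔ ∃ a ∈ A, ∃ b ∈ B, z ∈ hmul a b := by
  simp [setMul]

lemma exists_mem_hmul_assoc {a b c z : G} :
    (∃ p ∈ hmul a b, z ∈ hmul p c) ↔ ∃ x ∈ hmul b c, z ∈ hmul a x := by
  simpa using congrArg (z ∈ ·) (hmul_assoc a b c)

lemma setMul_comm (A B : Set G) : setMul A B = setMul B A := by
  ext z
  simp only [mem_setMul]
  constructor <;>
  · rintro ⟨a, ha, b, hb, hz⟩
    exact ⟨b, hb, a, ha, by rwa [hmul_comm]⟩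

lemma setMul_assoc (A B C : Set G) : setMul (setMul A B) C = setMul A (setMul B C) := by
  ext z
  simp only [mem_setMul]
  constructor
  · rintro ⟨p, ⟨a, ha, b, hb, hp⟩, c, hc, hz⟩
    obtain ⟨x, hx, hz⟩ := exists_mem_hmul_assoc.mp ⟨p, hp, hz⟩
    exact ⟨a, ha, x, ⟨b, hb, c, hc, hx⟩, hz⟩
  · rintro ⟨a, ha, x, ⟨b, hb, c, hc, hx⟩, hz⟩
    obtain ⟨p, hp, hz⟩ := exists_mem_hmul_assoc.mpr ⟨x, hx, hz⟩
    exact ⟨p, ⟨a, ha, b, hb, hp⟩, c, hc, hz⟩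

lemma setMul_mono {A B C D : Set G} (hAC : A ⊆ C) (hBD : B ⊆ D) : setMul A B ⊆ setMul C D := by
  intro z hz
  obtain ⟨a, ha, b, hb, hz⟩ := mem_setMul.mp hz
  exact mem_setMul.mpr ⟨a, hAC ha, b, hBD hb, hz⟩

lemma setMul_singleton (a b : G) : setMul {a} {b} = hmul a b := by
  simp [setMul]

lemma hPow_one (a : G) : hPow a 1 = {a} := rfl

lemma hPow_succ (a : G) {n : ℕ} (hn : 1 ≤ n) : hPow a (n + 1) = setMul {a} (hPow a n) := by
  obtain ⟨m, rfl⟩ := Nat.exists_eq_add_of_le' hn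
  change smulSet a (hPow a (m + 1)) = _
  simp [smulSet, setMul]

lemma hPow_subset_setMul_hPow {a b z : G} (hz : z ∈ hmul a b) {n : ℕ} (hn : 1 ≤ n) :
    hPow z n ⊆ setMul (hPow a n) (hPow b n) := by
  induction n, hn using Nat.le_induction with
  | base => simpa [hPow_one, setMul_singleton] using hz
  | succ n hn ih =>
    rw [hPow_succ z hn, hPow_succ a hn, hPow_succ b hn]
    calc setMul {z} (hPow z n)
        ⊆ setMul (setMul {a} {b}) (setMul (hPow a n) (hPow b n)) :=
          setMul_mono (by simpa [setMul_singleton] using hz) ih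
      _ = setMul (setMul {a} (hPow a n)) (setMul {b} (hPow b n)) := by
          rw [setMul_assoc, setMul_assoc, ← setMul_assoc {b}, setMul_comm {b} (hPow a n),
            setMul_assoc]

namespace IsHyperideal

variable {A B : Set G}

lemma zero_mem (hA : IsHyperideal A) : (0 : G) ∈ A := by
  obtain ⟨a, ha⟩ := hA.1
  simpa using hA.2.1 a ha a ha

lemma inter (hA : IsHyperideal A) (hB : IsHyperideal B) : IsHyperideal (A ∩ B) :=
  ⟨⟨0, hA.zero_mem, hB.zero_mem⟩,
    fun x hx y hy => ⟨hA.2.1 x hx.1 y hy.1, hB.2.1 x hx.2 y hy.2⟩,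
    fun r x hx => subset_inter (hA.2.2 r x hx.1) (hB.2.2 r x hx.2)⟩

lemma setMul_subset_right (hA : IsHyperideal A) : setMul B A ⊆ A := by
  intro z hz
  obtain ⟨b, -, a, ha, hz⟩ := mem_setMul.mp hz
  exact hA.2.2 b a ha hz

lemma hPow_subset (hA : IsHyperideal A) {a : G} (ha : a ∈ A) {n : ℕ} (hn : 1 ≤ n) :
    hPow a n ⊆ A := by
  induction n, hn using Nat.le_induction with
  | base => simpa [hPow_one] using ha
  | succ n hn ih =>
    rw [hPow_succ a hn]
    exact (setMul_mono subset_rfl ih).trans hA.setMul_subset_right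

end IsHyperideal

lemma isHyperideal_idealGen (X : Set G) : IsHyperideal (idealGen X) := by
  simp only [idealGen, IsHyperideal, mem_sInter]
  refine ⟨⟨0, fun A hA => IsHyperideal.zero_mem hA.1⟩, ?_, ?_⟩
  · exact fun x hx y hy A hA => hA.1.2.1 x (hx A hA) y (hy A hA)
  · exact fun r x hx z hz A hA => hA.1.2.2 r x (hx A hA) hz

lemma subset_idealGen (X : Set G) : X ⊆ idealGen X :=
  fun _ hx => mem_sInter.mpr fun _ hA => hA.2 hx

lemma idealGen_subset {X A : Set G} (hA : IsHyperideal A) (hXA : X ⊆ A) : idealGen X ⊆ A :=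
  sInter_subset_of_mem ⟨hA, hXA⟩

lemma idealMul_subset_inter {A B : Set G} (hA : IsHyperideal A) (hB : IsHyperideal B) :
    idealMul B A ⊆ A ∩ B :=
  idealGen_subset (hA.inter hB) <| subset_inter hA.setMul_subset_right <|
    setMul_comm B A ▸ hB.setMul_subset_right

lemma rad_mono {A B : Set G} (hAB : A ⊆ B) : rad A ⊆ rad B := by
  rintro x ⟨n, hn, hx⟩
  exact ⟨n, hn, hx.trans hAB⟩

lemma hmul_subset_rad_idealMul {A B : Set G} (hB : IsHyperideal B) {s x : G} (hs : s ∈ B)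
    (hx : x ∈ rad A) : hmul s x ⊆ rad (idealMul B A) := by
  obtain ⟨n, hn, hxA⟩ := hx
  intro z hz
  refine ⟨n, hn, ?_⟩
  calc hPow z n ⊆ setMul (hPow s n) (hPow x n) := hPow_subset_setMul_hPow hz hn
    _ ⊆ setMul B A := setMul_mono (hB.hPow_subset hs hn) hxA
    _ ⊆ idealMul B A := subset_idealGen _

theorem IsQuasiSPrimary.of_subset {S A C : Set G} (hS : IsMCS S) (hA : IsQuasiSPrimary S A)
    (hC : IsHyperideal C) (hCA : C ⊆ A) {s : G} (hs : s ∈ S)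
    (hrad : ∀ x ∈ rad A, hmul s x ⊆ rad C) : IsQuasiSPrimary S C := by
  obtain ⟨-, hAS, t, ht, htA⟩ := hA
  obtain ⟨t', ht', ht'S⟩ := hS.2 t ht s hs
  have hwitness : ∀ u, hmul t u ⊆ rad A → hmul t' u ⊆ rad C := by
    intro u htu z hz
    obtain ⟨x, hx, hz⟩ := exists_mem_hmul_assoc.mp ⟨t', by rwa [hmul_comm], hz⟩
    exact hrad x (htu hx) hz
  refine ⟨hC, subset_empty_iff.mp (hAS ▸ inter_subset_inter_left S hCA), t', ht'S, ?_⟩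
  intro u v huv
  exact (htA u v (huv.trans hCA)).imp (hwitness u) (hwitness v)

end MulHyperring

open MulHyperring in
theorem quasiSPrimary_idealMul_and_inter {G : Type*} [MulHyperring G] (A B S : Set G)
    (hA : IsCHyperideal A) (hB : IsCHyperideal B) (hS : IsMCS S)
    (hBS : (B ∩ S).Nonempty) (h : IsQuasiSPrimary S A) :
    IsQuasiSPrimary S (idealMul B A) ∧ IsQuasiSPrimary S (A ∩ B) := by
  obtain ⟨s, hsB, hsS⟩ := hBS
  have hsub : idealMul B A ⊆ A ∩ B := idealMul_subset_inter hA.1 hB.1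
  have hrad : ∀ x ∈ rad A, hmul s x ⊆ rad (idealMul B A) :=
    fun x hx => hmul_subset_rad_idealMul hB.1 hsB hx
  exact ⟨h.of_subset hS (isHyperideal_idealGen _) (hsub.trans inter_subset_left) hsS hrad,
    h.of_subset hS (hA.1.inter hB.1) inter_subset_left hsS
      fun x hx => (hrad x hx).trans (rad_mono hsub)⟩
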